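/- arXiv:2605.12868 — 3 statements merged into one kernel-verified Lean document; each statement's English description precedes it below -/
import Mathlib

section
/- Let m > 1 divide n. For each t with 0 ≤ t ≤ n/m − 1, the map θ_{n,m,t} : Z_n → Z_n defined by θ_{n,m,t}(x) = x + j·t·m (mod n), where j is the residue of x modulo m (i.e., x = qm + j with 0 ≤ j ≤ m−1), is a bijection. -/
/-- For `m > 1` dividing `n` and `0 ≤ t ≤ n/m − 1`, the map
`θ_{n,m,t}(x) = x + j·t·m (mod n)`, where `j = x mod m`, is a bijection of `Z_n`. -/
theorem stmt_6 (n m : ℕ) [NeZero n] (hm : 1 < m) (hmn : m ∣ n) (t : ℕ) (ht : t < n / m) :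
    Function.Bijective
      (fun x : ZMod n => x + ((x.val % m : ℕ) : ZMod n) * t * m) := by
  have : NeZero m := ⟨by omega⟩
  rw [← Finite.injective_iff_bijective]
  intro x y h
  simp only at h
  have hc : (ZMod.castHom hmn (ZMod m)) (x + ((x.val % m : ℕ) : ZMod n) * t * m)
      = (ZMod.castHom hmn (ZMod m)) (y + ((y.val % m : ℕ) : ZMod n) * t * m) := by rw [h]
  simp only [map_add, map_mul, map_natCast, ZMod.natCast_self, mul_zero, add_zero] at hc
  have hv : x.val % m = y.val % m := by
    have key : ∀ z : ZMod n, ((ZMod.castHom hmn (ZMod m)) z).val = z.val % m := by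
      intro z
      rw [ZMod.castHom_apply, ← ZMod.natCast_val, ZMod.val_natCast]
    rw [← key x, ← key y, hc]
  rw [hv] at h
  exact add_right_cancel h
end

section
/- Let n ≥ 2 and 1 ≤ 2s−1 ≤ 2n−1 with n ≠ 2s−1. Set R = {2, 2s−1, 4n−(2s−1)} and S = {2, 2n−(2s−1), 2n+(2s−1)}, viewed as connection sets in Z_{8n} (closed under negation). Then θ_{8n,2,n}(R ∪ (8n − R)) = S ∪ (8n − S) as subsets of Z_{8n}, where θ_{8n,2,n}(x) = x + 2n·(x mod 2) mod 8n. Consequently C_{8n}(R) and C_{8n}(S) are isomorphic graphs. -/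
/-- For `n ≥ 2`, `1 ≤ 2s−1 ≤ 2n−1`, `n ≠ 2s−1`, with `R = {2, 2s−1, 4n−(2s−1)}` and
`S = {2, 2n−(2s−1), 2n+(2s−1)}` in `Z_{8n}`, the map `θ_{8n,2,n}` carries `R ∪ (8n − R)`
onto `S ∪ (8n − S)`; consequently `C_{8n}(R)` and `C_{8n}(S)` are isomorphic graphs. -/
theorem stmt_14 (n s : ℕ) (hn : 2 ≤ n) (hs : 1 ≤ s) (hs' : 2 * s - 1 ≤ 2 * n - 1)
    (hne : n ≠ 2 * s - 1)
    (R : Set (ZMod (8 * n))) (S : Set (ZMod (8 * n)))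
    (hR : R = {(2 : ZMod (8 * n)), ((2 * s - 1 : ℕ) : ZMod (8 * n)),
      ((4 * n - (2 * s - 1) : ℕ) : ZMod (8 * n))})
    (hS : S = {(2 : ZMod (8 * n)), ((2 * n - (2 * s - 1) : ℕ) : ZMod (8 * n)),
      ((2 * n + (2 * s - 1) : ℕ) : ZMod (8 * n))}) :
    ((fun x : ZMod (8 * n) => x + ((x.val % 2 : ℕ) : ZMod (8 * n)) * n * 2) ''
        (R ∪ (fun a : ZMod (8 * n) => -a) '' R) =
      S ∪ (fun a : ZMod (8 * n) => -a) '' S) ∧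
    Nonempty
      ((SimpleGraph.fromRel fun x y : ZMod (8 * n) =>
          x - y ∈ R ∪ (fun a : ZMod (8 * n) => -a) '' R) ≃g
        (SimpleGraph.fromRel fun x y : ZMod (8 * n) =>
          x - y ∈ S ∪ (fun a : ZMod (8 * n) => -a) '' S)) := by
  haveI : NeZero (8 * n) := ⟨by omega⟩
  have hdvd : (2 : ℕ) ∣ 8 * n := ⟨4 * n, by ring⟩
  set ν : ZMod (8 * n) := ((n : ℕ) : ZMod (8 * n)) with hν_def
  set A : ZMod (8 * n) := ((2 * s - 1 : ℕ) : ZMod (8 * n)) with hA_def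
  set par := ZMod.castHom hdvd (ZMod 2) with hpar_def
  have hz2 : ∀ z : ZMod 2, z = 0 ∨ z = 1 := by decide
  have hz20 : (2 : ZMod 2) = 0 := by decide
  have hz40 : (4 : ZMod 2) = 0 := by decide
  have hz60 : (6 : ZMod 2) = 0 := by decide
  have hparval : ∀ x : ZMod (8 * n), x.val % 2 = (par x).val := by
    intro x
    rw [hpar_def, ZMod.castHom_apply, ← ZMod.natCast_val, ZMod.val_natCast]
  have h8n0 : (8 : ZMod (8 * n)) * ν = 0 := by
    rw [hν_def]
    exact_mod_cast ZMod.natCast_self (8 * n)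
  have hA2 : ((2 * s - 1 : ℕ) : ZMod 2) = 1 := by
    rw [← ZMod.natCast_mod, show (2 * s - 1) % 2 = 1 by omega, Nat.cast_one]
  -- cast lemmas
  have hc1 : ((4 * n - (2 * s - 1) : ℕ) : ZMod (8 * n)) = 4 * ν - A := by
    rw [hA_def, hν_def, Nat.cast_sub (by omega)]
    push_cast
    ring
  have hc2 : ((2 * n - (2 * s - 1) : ℕ) : ZMod (8 * n)) = 2 * ν - A := by
    rw [hA_def, hν_def, Nat.cast_sub (by omega)]
    push_cast
    ring
  have hc3 : ((2 * n + (2 * s - 1) : ℕ) : ZMod (8 * n)) = 2 * ν + A := by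
    rw [hA_def, hν_def]
    push_cast
    ring
  -- parity facts
  have hpA : par A = 1 := by
    rw [hA_def, map_natCast]
    exact hA2
  have hp2 : par 2 = 0 := by rw [map_ofNat]; exact hz20
  have hpm2 : par (-2) = 0 := by rw [map_neg, hp2, neg_zero]
  have hp4A : par (4 * ν - A) = 1 := by
    rw [map_sub, map_mul, map_ofNat, hpA, hz40, zero_mul, zero_sub]; decide
  have hpmA : par (-A) = 1 := by rw [map_neg, hpA]; decide
  have hpm4A : par (-(4 * ν - A)) = 1 := by rw [map_neg, hp4A]; decide
  have hq1 : par (2 * ν - A) = 1 := by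
    rw [map_sub, map_mul, map_ofNat, hpA, hz20, zero_mul, zero_sub]; decide
  have hq2 : par (2 * ν + A) = 1 := by
    rw [map_add, map_mul, map_ofNat, hpA, hz20, zero_mul, zero_add]
  have hqm1 : par (-(2 * ν - A)) = 1 := by rw [map_neg, hq1]; decide
  have hqm2 : par (-(2 * ν + A)) = 1 := by rw [map_neg, hq2]; decide
  have hp2ν : par (2 * ν) = 0 := by rw [map_mul, map_ofNat, hz20, zero_mul]
  have hp6ν : par (6 * ν) = 0 := by rw [map_mul, map_ofNat, hz60, zero_mul]
  -- the map on even and odd elements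
  have hf0 : ∀ x : ZMod (8 * n), par x = 0 →
      x + ((x.val % 2 : ℕ) : ZMod (8 * n)) * ν * 2 = x := by
    intro x hx
    rw [hparval x, hx, show (0 : ZMod 2).val = 0 from rfl, Nat.cast_zero, zero_mul, zero_mul,
      add_zero]
  have hf1 : ∀ x : ZMod (8 * n), par x = 1 →
      x + ((x.val % 2 : ℕ) : ZMod (8 * n)) * ν * 2 = x + 2 * ν := by
    intro x hx
    rw [hparval x, hx, show (1 : ZMod 2).val = 1 from rfl, Nat.cast_one, one_mul]
    ring
  have hg0 : ∀ x : ZMod (8 * n), par x = 0 →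
      x + ((x.val % 2 : ℕ) : ZMod (8 * n)) * ν * 6 = x := by
    intro x hx
    rw [hparval x, hx, show (0 : ZMod 2).val = 0 from rfl, Nat.cast_zero, zero_mul, zero_mul,
      add_zero]
  have hg1 : ∀ x : ZMod (8 * n), par x = 1 →
      x + ((x.val % 2 : ℕ) : ZMod (8 * n)) * ν * 6 = x + 6 * ν := by
    intro x hx
    rw [hparval x, hx, show (1 : ZMod 2).val = 1 from rfl, Nat.cast_one, one_mul]
    ring
  -- explicit descriptions of the symmetric connection sets
  have hTR : R ∪ (fun a : ZMod (8 * n) => -a) '' R =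
      ({2, A, 4 * ν - A, -2, -A, -(4 * ν - A)} : Set (ZMod (8 * n))) := by
    rw [hR, hc1]
    simp only [Set.image_insert_eq, Set.image_singleton, Set.insert_union, Set.singleton_union]
  have hTS : S ∪ (fun a : ZMod (8 * n) => -a) '' S =
      ({2, 2 * ν - A, 2 * ν + A, -2, -(2 * ν - A), -(2 * ν + A)} : Set (ZMod (8 * n))) := by
    rw [hS, hc2, hc3]
    simp only [Set.image_insert_eq, Set.image_singleton, Set.insert_union, Set.singleton_union]
  -- key membership lemmas
  have key0 : ∀ d : ZMod (8 * n), par d = 0 →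
      (d ∈ ({2, A, 4 * ν - A, -2, -A, -(4 * ν - A)} : Set (ZMod (8 * n))) ↔
        d ∈ ({2, 2 * ν - A, 2 * ν + A, -2, -(2 * ν - A), -(2 * ν + A)} : Set (ZMod (8 * n)))) := by
    intro d hd
    simp only [Set.mem_insert_iff, Set.mem_singleton_iff]
    constructor
    · rintro (rfl | rfl | rfl | rfl | rfl | rfl)
      · exact Or.inl rfl
      · rw [hpA] at hd; exact absurd hd (by decide)
      · rw [hp4A] at hd; exact absurd hd (by decide)
      · exact Or.inr (Or.inr (Or.inr (Or.inl rfl)))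
      · rw [hpmA] at hd; exact absurd hd (by decide)
      · rw [hpm4A] at hd; exact absurd hd (by decide)
    · rintro (rfl | rfl | rfl | rfl | rfl | rfl)
      · exact Or.inl rfl
      · rw [hq1] at hd; exact absurd hd (by decide)
      · rw [hq2] at hd; exact absurd hd (by decide)
      · exact Or.inr (Or.inr (Or.inr (Or.inl rfl)))
      · rw [hqm1] at hd; exact absurd hd (by decide)
      · rw [hqm2] at hd; exact absurd hd (by decide)
  have keyp : ∀ d : ZMod (8 * n), par d = 1 →
      (d ∈ ({2, A, 4 * ν - A, -2, -A, -(4 * ν - A)} : Set (ZMod (8 * n))) ↔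
        d + 2 * ν ∈
          ({2, 2 * ν - A, 2 * ν + A, -2, -(2 * ν - A), -(2 * ν + A)} : Set (ZMod (8 * n)))) := by
    intro d hd
    simp only [Set.mem_insert_iff, Set.mem_singleton_iff]
    constructor
    · rintro (rfl | rfl | rfl | rfl | rfl | rfl)
      · rw [hp2] at hd; exact absurd hd (by decide)
      · exact Or.inr (Or.inr (Or.inl (by ring)))
      · exact Or.inr (Or.inr (Or.inr (Or.inr (Or.inr (by linear_combination h8n0)))))
      · rw [hpm2] at hd; exact absurd hd (by decide)
      · exact Or.inr (Or.inl (by ring))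
      · exact Or.inr (Or.inr (Or.inr (Or.inr (Or.inl (by ring)))))
    · intro h
      rcases h with h | h | h | h | h | h
      · have h' := congrArg par h
        rw [map_add, hd, hp2ν, hp2] at h'
        exact absurd h' (by decide)
      · have hd' : d = -A := by linear_combination h
        subst hd'
        exact Or.inr (Or.inr (Or.inr (Or.inr (Or.inl rfl))))
      · have hd' : d = A := by linear_combination h
        subst hd'
        exact Or.inr (Or.inl rfl)
      · have h' := congrArg par h
        rw [map_add, hd, hp2ν, hpm2] at h'
        exact absurd h' (by decide)
      · have hd' : d = -(4 * ν - A) := by linear_combination h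
        subst hd'
        exact Or.inr (Or.inr (Or.inr (Or.inr (Or.inr rfl))))
      · have hd' : d = 4 * ν - A := by linear_combination h - h8n0
        subst hd'
        exact Or.inr (Or.inr (Or.inl rfl))
  have keym : ∀ d : ZMod (8 * n), par d = 1 →
      (d ∈ ({2, A, 4 * ν - A, -2, -A, -(4 * ν - A)} : Set (ZMod (8 * n))) ↔
        d - 2 * ν ∈
          ({2, 2 * ν - A, 2 * ν + A, -2, -(2 * ν - A), -(2 * ν + A)} : Set (ZMod (8 * n)))) := by
    intro d hd
    simp only [Set.mem_insert_iff, Set.mem_singleton_iff]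
    constructor
    · rintro (rfl | rfl | rfl | rfl | rfl | rfl)
      · rw [hp2] at hd; exact absurd hd (by decide)
      · exact Or.inr (Or.inr (Or.inr (Or.inr (Or.inl (by ring)))))
      · exact Or.inr (Or.inl (by ring))
      · rw [hpm2] at hd; exact absurd hd (by decide)
      · exact Or.inr (Or.inr (Or.inr (Or.inr (Or.inr (by ring)))))
      · exact Or.inr (Or.inr (Or.inl (by linear_combination -h8n0)))
    · intro h
      rcases h with h | h | h | h | h | h
      · have h' := congrArg par h
        rw [map_sub, hd, hp2ν, hp2] at h'
        exact absurd h' (by decide)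
      · have hd' : d = 4 * ν - A := by linear_combination h
        subst hd'
        exact Or.inr (Or.inr (Or.inl rfl))
      · have hd' : d = -(4 * ν - A) := by linear_combination h + h8n0
        subst hd'
        exact Or.inr (Or.inr (Or.inr (Or.inr (Or.inr rfl))))
      · have h' := congrArg par h
        rw [map_sub, hd, hp2ν, hpm2] at h'
        exact absurd h' (by decide)
      · have hd' : d = A := by linear_combination h
        subst hd'
        exact Or.inr (Or.inl rfl)
      · have hd' : d = -A := by linear_combination h
        subst hd'
        exact Or.inr (Or.inr (Or.inr (Or.inr (Or.inl rfl))))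
  -- the crux: the map transforms differences in R-connection set to S-connection set
  have crux : ∀ x y : ZMod (8 * n),
      (x - y ∈ ({2, A, 4 * ν - A, -2, -A, -(4 * ν - A)} : Set (ZMod (8 * n))) ↔
        (x + ((x.val % 2 : ℕ) : ZMod (8 * n)) * ν * 2) -
            (y + ((y.val % 2 : ℕ) : ZMod (8 * n)) * ν * 2) ∈
          ({2, 2 * ν - A, 2 * ν + A, -2, -(2 * ν - A), -(2 * ν + A)} : Set (ZMod (8 * n)))) := by
    intro x y
    rcases hz2 (par x) with hx | hx <;> rcases hz2 (par y) with hy | hy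
    · rw [hf0 x hx, hf0 y hy]
      exact key0 _ (by rw [map_sub, hx, hy, sub_zero])
    · rw [hf0 x hx, hf1 y hy, show x - (y + 2 * ν) = (x - y) - 2 * ν by ring]
      exact keym _ (by rw [map_sub, hx, hy]; decide)
    · rw [hf1 x hx, hf0 y hy, show (x + 2 * ν) - y = (x - y) + 2 * ν by ring]
      exact keyp _ (by rw [map_sub, hx, hy]; decide)
    · rw [hf1 x hx, hf1 y hy, show (x + 2 * ν) - (y + 2 * ν) = x - y by ring]
      exact key0 _ (by rw [map_sub, hx, hy, sub_self])
  -- bijectivity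
  have hgf : Function.LeftInverse
      (fun x : ZMod (8 * n) => x + ((x.val % 2 : ℕ) : ZMod (8 * n)) * ν * 6)
      (fun x : ZMod (8 * n) => x + ((x.val % 2 : ℕ) : ZMod (8 * n)) * ν * 2) := by
    intro x
    simp only
    rcases hz2 (par x) with hx | hx
    · rw [hf0 x hx, hg0 x hx]
    · rw [hf1 x hx]
      have hx' : par (x + 2 * ν) = 1 := by rw [map_add, hx, hp2ν, add_zero]
      rw [hg1 _ hx']
      linear_combination h8n0
  have hfg : Function.RightInverse
      (fun x : ZMod (8 * n) => x + ((x.val % 2 : ℕ) : ZMod (8 * n)) * ν * 6)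
      (fun x : ZMod (8 * n) => x + ((x.val % 2 : ℕ) : ZMod (8 * n)) * ν * 2) := by
    intro x
    simp only
    rcases hz2 (par x) with hx | hx
    · rw [hg0 x hx, hf0 x hx]
    · rw [hg1 x hx]
      have hx' : par (x + 6 * ν) = 1 := by rw [map_add, hx, hp6ν, add_zero]
      rw [hf1 _ hx']
      linear_combination h8n0
  constructor
  · -- image equality
    rw [hTR, hTS]
    simp only [Set.image_insert_eq, Set.image_singleton]
    rw [hf0 2 hp2, hf1 A hpA, hf1 _ hp4A, hf0 _ hpm2, hf1 _ hpmA, hf1 _ hpm4A]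
    ext x
    simp only [Set.mem_insert_iff, Set.mem_singleton_iff]
    constructor
    · rintro (rfl | rfl | rfl | rfl | rfl | rfl)
      · exact Or.inl rfl
      · exact Or.inr (Or.inr (Or.inl (by ring)))
      · exact Or.inr (Or.inr (Or.inr (Or.inr (Or.inr (by linear_combination h8n0)))))
      · exact Or.inr (Or.inr (Or.inr (Or.inl rfl)))
      · exact Or.inr (Or.inl (by ring))
      · exact Or.inr (Or.inr (Or.inr (Or.inr (Or.inl (by ring)))))
    · rintro (rfl | rfl | rfl | rfl | rfl | rfl)
      · exact Or.inl rfl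
      · exact Or.inr (Or.inr (Or.inr (Or.inr (Or.inl (by ring)))))
      · exact Or.inr (Or.inl (by ring))
      · exact Or.inr (Or.inr (Or.inr (Or.inl rfl)))
      · exact Or.inr (Or.inr (Or.inr (Or.inr (Or.inr (by ring)))))
      · exact Or.inr (Or.inr (Or.inl (by linear_combination -h8n0)))
  · -- graph isomorphism
    refine ⟨⟨⟨fun x : ZMod (8 * n) => x + ((x.val % 2 : ℕ) : ZMod (8 * n)) * ν * 2,
        fun x : ZMod (8 * n) => x + ((x.val % 2 : ℕ) : ZMod (8 * n)) * ν * 6,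
        hgf, hfg⟩, @fun x y => ?_⟩⟩
    simp only [SimpleGraph.fromRel_adj, Equiv.coe_fn_mk]
    rw [hTR, hTS]
    exact and_congr hgf.injective.ne_iff
      (or_congr (crux x y).symm (crux y x).symm)
end

section
/- Let p be prime, n ≥ 1, and for 1 ≤ i ≤ p let d_i = pn(i−1) + 1 ∈ Z_{np³} and R_i = {p} ∪ {k·np² ± d_i : 0 ≤ k ≤ p−1} (reduced modulo np³, symmetric closure). Then for all i, j, the map θ_{np³,p,jn}(x) = x + p·jn·(x mod p) mod np³ maps R_i ∪ (np³ − R_i) onto R_{i+j} ∪ (np³ − R_{i+j}), where i + j is computed modulo p. In particular the graphs C_{np³}(R_i), 1 ≤ i ≤ p, are pairwise isomorphic. -/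
/-- The connection set `R_i = {p} ∪ {k·np² ± d_i : 0 ≤ k ≤ p−1}` in `Z_{np³}`, where
`d_i = pn(i−1) + 1`. -/
def circSet (p n i : ℕ) : Set (ZMod (n * p ^ 3)) :=
  insert ((p : ℕ) : ZMod (n * p ^ 3))
    {x : ZMod (n * p ^ 3) | ∃ k : ℕ, k < p ∧
      (x = ((k * (n * p ^ 2) : ℕ) : ZMod (n * p ^ 3)) + ((p * n * (i - 1) + 1 : ℕ) : ZMod (n * p ^ 3)) ∨
       x = ((k * (n * p ^ 2) : ℕ) : ZMod (n * p ^ 3)) - ((p * n * (i - 1) + 1 : ℕ) : ZMod (n * p ^ 3)))}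

namespace Stmt16

variable (p n : ℕ)

def th (j : ℕ) (x : ZMod (n * p ^ 3)) : ZMod (n * p ^ 3) :=
  x + ((x.val % p : ℕ) : ZMod (n * p ^ 3)) * ((p * (j * n) : ℕ) : ZMod (n * p ^ 3))

def Nc : ZMod (n * p ^ 3) := ((n * p ^ 2 : ℕ) : ZMod (n * p ^ 3))

def SZ (δ : ZMod (n * p ^ 3)) : Set (ZMod (n * p ^ 3)) :=
  {x | ∃ m : ℤ, x = (m : ZMod (n * p ^ 3)) * Nc p n + δ ∨
                x = (m : ZMod (n * p ^ 3)) * Nc p n - δ}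

def Sym (δ : ZMod (n * p ^ 3)) : Set (ZMod (n * p ^ 3)) :=
  insert ((p : ℕ) : ZMod (n * p ^ 3))
    (insert (-((p : ℕ) : ZMod (n * p ^ 3))) (SZ p n δ))

def ee (i : ℕ) : ℕ := p * n * (i - 1) + 1

lemma pdvd : p ∣ n * p ^ 3 := ⟨n * p ^ 2, by ring⟩

lemma pNc : ((p : ℕ) : ZMod (n * p ^ 3)) * Nc p n = 0 := by
  rw [Nc, ← Nat.cast_mul, show p * (n * p ^ 2) = n * p ^ 3 by ring, ZMod.natCast_self]

lemma ptc (j : ℕ) : ((p : ℕ) : ZMod (n * p ^ 3)) * ((p * (j * n) : ℕ) : ZMod (n * p ^ 3))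
    = ((j : ℕ) : ZMod (n * p ^ 3)) * Nc p n := by
  rw [Nc]; push_cast; ring

lemma intNc (hp : 0 < p) (m : ℤ) :
    ∃ r : ℕ, r < p ∧ ((r * (n * p ^ 2) : ℕ) : ZMod (n * p ^ 3)) = (m : ZMod (n * p ^ 3)) * Nc p n := by
  have hp' : (0:ℤ) < p := by exact_mod_cast hp
  have hnn : 0 ≤ m % p := Int.emod_nonneg m hp'.ne'
  refine ⟨(m % p).toNat, ?_, ?_⟩
  · have h1 := Int.emod_lt_of_pos m hp'
    omega
  · have hr : (((m % p).toNat : ℕ) : ℤ) = m % p := Int.toNat_of_nonneg hnn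
    have h7 : ((m:ℤ) : ZMod (n * p ^ 3)) = ((m % p : ℤ) : ZMod (n * p ^ 3))
        + ((m / p : ℤ) : ZMod (n * p ^ 3)) * ((p : ℕ) : ZMod (n * p ^ 3)) := by
      conv_lhs => rw [show (m:ℤ) = m % p + p * (m / p) from (Int.emod_add_mul_ediv m p).symm]
      push_cast
      ring
    have step0 : ∀ r : ℕ, ((r * (n * p ^ 2) : ℕ) : ZMod (n * p ^ 3))
        = ((r : ℕ) : ZMod (n * p ^ 3)) * Nc p n := by
      intro r; rw [Nc]; push_cast; ring
    have step1 : (((m % p).toNat : ℕ) : ZMod (n * p ^ 3)) = ((m % p : ℤ) : ZMod (n * p ^ 3)) := by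
      have h := congrArg (fun z : ℤ => (z : ZMod (n * p ^ 3))) hr
      push_cast at h
      exact h
    rw [step0, step1]
    linear_combination -(Nc p n) * h7 - ((m / p : ℤ) : ZMod (n * p ^ 3)) * pNc p n

lemma negcast (hn : 0 < n) (hp : 0 < p) (e : ℕ) :
    ((e * (n * p ^ 3 - 1) : ℕ) : ZMod (n * p ^ 3)) = -((e : ℕ) : ZMod (n * p ^ 3)) := by
  have h1 : e * (n * p ^ 3 - 1) = e * (n * p ^ 3) - e := by
    rw [Nat.mul_sub, Nat.mul_one]
  rw [h1, Nat.cast_sub (Nat.le_mul_of_pos_right e (Nat.mul_pos hn (pow_pos hp 3))), Nat.cast_mul,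
    ZMod.natCast_self, mul_zero, zero_sub]

lemma valp [NeZero (n * p ^ 3)] (u : ℕ) : ((u : ZMod (n * p ^ 3))).val % p = u % p := by
  rw [ZMod.val_natCast]; exact Nat.mod_mod_of_dvd u (pdvd p n)

lemma valp2 [NeZero (n * p ^ 3)] (x : ZMod (n * p ^ 3)) (u : ℕ) :
    (x + (u : ZMod (n * p ^ 3))).val % p = (x.val + u) % p := by
  rw [ZMod.val_add, Nat.mod_mod_of_dvd _ (pdvd p n), ZMod.val_natCast]
  exact Nat.ModEq.add_left x.val (Nat.mod_mod_of_dvd u (pdvd p n))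

lemma diff_key [NeZero (n * p ^ 3)] (j : ℕ) (x y : ZMod (n * p ^ 3)) (u : ℕ)
    (hxy : x = y + (u : ZMod (n * p ^ 3))) :
    ∃ m : ℤ, th p n j x - th p n j y
      = (u : ZMod (n * p ^ 3))
        + ((u % p : ℕ) : ZMod (n * p ^ 3)) * ((p * (j * n) : ℕ) : ZMod (n * p ^ 3))
        + (m : ZMod (n * p ^ 3)) * Nc p n := by
  set s := u % p with hs
  set a := x.val % p with ha
  set b := y.val % p with hb
  have h2 : a % p = (b + s) % p := by
    rw [ha, hxy, valp2, Nat.mod_mod_of_dvd _ dvd_rfl, hb, hs]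
    exact Nat.add_mod _ _ _
  have h2' : (a : ℤ) % p = ((b : ℤ) + (s : ℤ)) % p := by
    exact_mod_cast congrArg (Nat.cast : ℕ → ℤ) h2
  obtain ⟨m2, hm2⟩ : (p : ℤ) ∣ ((a : ℤ) - ((b : ℤ) + (s : ℤ))) :=
    Int.dvd_of_emod_eq_zero (Int.emod_eq_emod_iff_emod_sub_eq_zero.mp h2')
  have hC : ((a : ℕ) : ZMod (n * p ^ 3)) - ((b : ℕ) : ZMod (n * p ^ 3))
      - ((s : ℕ) : ZMod (n * p ^ 3))
      = ((p : ℕ) : ZMod (n * p ^ 3)) * ((m2 : ℤ) : ZMod (n * p ^ 3)) := by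
    have h := congrArg (fun z : ℤ => (z : ZMod (n * p ^ 3))) hm2
    push_cast at h
    linear_combination h
  refine ⟨m2 * j, ?_⟩
  have expand : th p n j x - th p n j y
      = (x - y) + (((a : ℕ) : ZMod (n * p ^ 3)) - ((b : ℕ) : ZMod (n * p ^ 3)))
          * ((p * (j * n) : ℕ) : ZMod (n * p ^ 3)) := by
    simp only [th, ← ha, ← hb]; ring
  rw [expand, hxy]
  have hptc := ptc p n j
  have hmj : ((m2 * j : ℤ) : ZMod (n * p ^ 3))
      = ((m2 : ℤ) : ZMod (n * p ^ 3)) * ((j : ℕ) : ZMod (n * p ^ 3)) := by push_cast; ring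
  linear_combination ((p * (j * n) : ℕ) : ZMod (n * p ^ 3)) * hC
    + ((m2 : ℤ) : ZMod (n * p ^ 3)) * hptc - (Nc p n) * hmj

lemma ee_mod (hp : 1 < p) (i : ℕ) : ee p n i % p = 1 := by
  rw [ee, show p * n * (i - 1) + 1 = p * (n * (i - 1)) + 1 by ring, Nat.mul_add_mod]
  exact Nat.mod_eq_of_lt hp

lemma M1_mod (hn : 0 < n) (hp : 1 < p) : (n * p ^ 3 - 1) % p = p - 1 := by
  have hq : 1 ≤ n * p ^ 2 := Nat.mul_pos hn (pow_pos (by omega) 2)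
  have hmul : p * (n * p ^ 2 - 1) = p * (n * p ^ 2) - p := by
    rw [Nat.mul_sub, Nat.mul_one]
  have h2 : p * (n * p ^ 2) = n * p ^ 3 := by ring
  have h3 : p * 1 ≤ p * (n * p ^ 2) := Nat.mul_le_mul_left p hq
  have key : n * p ^ 3 - 1 = p * (n * p ^ 2 - 1) + (p - 1) := by omega
  rw [key, Nat.mul_add_mod, Nat.mod_eq_of_lt (by omega)]

lemma u_plus_mod (hp : 1 < p) (r i : ℕ) : (r * (n * p ^ 2) + ee p n i) % p = 1 := by
  rw [show r * (n * p ^ 2) + ee p n i = p * (r * (n * p) + n * (i - 1)) + 1 by rw [ee]; ring,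
    Nat.mul_add_mod]
  exact Nat.mod_eq_of_lt hp

lemma u_minus_mod (hn : 0 < n) (hp : 1 < p) (r i : ℕ) :
    (r * (n * p ^ 2) + ee p n i * (n * p ^ 3 - 1)) % p = p - 1 := by
  have e1 : r * (n * p ^ 2) ≡ 0 [MOD p] := (Nat.modEq_zero_iff_dvd).mpr ⟨r * (n * p), by ring⟩
  have e2 : ee p n i ≡ 1 [MOD p] := by
    show ee p n i % p = 1 % p
    rw [ee_mod p n hp i, Nat.mod_eq_of_lt hp]
  have e3 : (n * p ^ 3 - 1) ≡ (p - 1) [MOD p] := by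
    show (n * p ^ 3 - 1) % p = (p - 1) % p
    rw [M1_mod p n hn hp, Nat.mod_eq_of_lt (by omega)]
  have htot := e1.add (e2.mul e3)
  have : (r * (n * p ^ 2) + ee p n i * (n * p ^ 3 - 1)) % p = (0 + 1 * (p - 1)) % p := htot
  rw [this, Nat.zero_add, Nat.one_mul, Nat.mod_eq_of_lt (by omega)]

lemma eesum (i j : ℕ) (hi : 1 ≤ i) : ee p n i + p * (j * n) = ee p n (i + j) := by
  rw [ee, ee]
  have h : i + j - 1 = (i - 1) + j := by omega
  rw [h]; ring

lemma memdiff [NeZero (n * p ^ 3)] (hpp : p.Prime) (hn : 0 < n) (i j : ℕ) (hi : 1 ≤ i)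
    (x y : ZMod (n * p ^ 3))
    (h : x - y ∈ Sym p n ((ee p n i : ℕ) : ZMod (n * p ^ 3))) :
    th p n j x - th p n j y ∈ Sym p n ((ee p n (i + j) : ℕ) : ZMod (n * p ^ 3)) := by
  have hp1 : 1 < p := hpp.one_lt
  have hp0 : 0 < p := hpp.pos
  simp only [Sym, Set.mem_insert_iff] at h ⊢
  rcases h with h | h | h
  · -- x - y = p
    have hx : x = y + ((p : ℕ) : ZMod (n * p ^ 3)) := sub_eq_iff_eq_add'.mp h
    have hab : x.val % p = y.val % p := by rw [hx, valp2, Nat.add_mod_right]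
    have hd : th p n j x - th p n j y = x - y := by
      simp only [th, hab]; ring
    exact Or.inl (by rw [hd, h])
  · -- x - y = -p
    have hy : y = x + ((p : ℕ) : ZMod (n * p ^ 3)) := by
      apply sub_eq_iff_eq_add'.mp
      rw [← neg_sub, h, neg_neg]
    have hab : y.val % p = x.val % p := by rw [hy, valp2, Nat.add_mod_right]
    have hd : th p n j x - th p n j y = x - y := by
      simp only [th, hab]; ring
    exact Or.inr (Or.inl (by rw [hd, h]))
  · obtain ⟨m, hm | hm⟩ := h
    · -- x - y = m·Nc + δᵢ
      obtain ⟨r, hr, hrm⟩ := intNc p n hp0 m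
      have hu : x = y + ((r * (n * p ^ 2) + ee p n i : ℕ) : ZMod (n * p ^ 3)) := by
        apply sub_eq_iff_eq_add'.mp
        rw [hm, Nat.cast_add, hrm]
      obtain ⟨m', hm'⟩ := diff_key p n j x y _ hu
      rw [u_plus_mod p n hp1 r i] at hm'
      refine Or.inr (Or.inr ⟨(r : ℤ) + m', Or.inl ?_⟩)
      rw [hm']
      have h1 : ((r * (n * p ^ 2) : ℕ) : ZMod (n * p ^ 3))
          = ((r : ℕ) : ZMod (n * p ^ 3)) * Nc p n := by rw [Nc]; push_cast; ring
      have h2 : ((ee p n i : ℕ) : ZMod (n * p ^ 3)) + ((p * (j * n) : ℕ) : ZMod (n * p ^ 3))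
          = ((ee p n (i + j) : ℕ) : ZMod (n * p ^ 3)) := by
        rw [← Nat.cast_add, eesum p n i j hi]
      push_cast
      push_cast at h1 h2
      linear_combination h1 + h2
    · -- x - y = m·Nc - δᵢ
      obtain ⟨r, hr, hrm⟩ := intNc p n hp0 m
      have hu : x = y + ((r * (n * p ^ 2) + ee p n i * (n * p ^ 3 - 1) : ℕ) : ZMod (n * p ^ 3)) := by
        apply sub_eq_iff_eq_add'.mp
        rw [hm, Nat.cast_add, hrm, negcast p n hn hp0]
        ring
      obtain ⟨m', hm'⟩ := diff_key p n j x y _ hu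
      rw [u_minus_mod p n hn hp1 r i] at hm'
      refine Or.inr (Or.inr ⟨(r : ℤ) + (j : ℤ) + m', Or.inr ?_⟩)
      rw [hm']
      have h1 : ((r * (n * p ^ 2) : ℕ) : ZMod (n * p ^ 3))
          = ((r : ℕ) : ZMod (n * p ^ 3)) * Nc p n := by rw [Nc]; push_cast; ring
      have h2 : ((ee p n i : ℕ) : ZMod (n * p ^ 3)) + ((p * (j * n) : ℕ) : ZMod (n * p ^ 3))
          = ((ee p n (i + j) : ℕ) : ZMod (n * p ^ 3)) := by
        rw [← Nat.cast_add, eesum p n i j hi]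
      have h3 : ((p - 1 : ℕ) : ZMod (n * p ^ 3)) * ((p * (j * n) : ℕ) : ZMod (n * p ^ 3))
          = ((j : ℕ) : ZMod (n * p ^ 3)) * Nc p n - ((p * (j * n) : ℕ) : ZMod (n * p ^ 3)) := by
        rw [← Nat.cast_mul, Nat.sub_mul, Nat.one_mul,
          Nat.cast_sub (Nat.le_mul_of_pos_left _ hp0)]
        have h4 : ((p * (p * (j * n)) : ℕ) : ZMod (n * p ^ 3))
            = ((j : ℕ) : ZMod (n * p ^ 3)) * Nc p n := by rw [Nc]; push_cast; ring
        rw [h4]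
      have h5 : ((r * (n * p ^ 2) + ee p n i * (n * p ^ 3 - 1) : ℕ) : ZMod (n * p ^ 3))
          = ((r : ℕ) : ZMod (n * p ^ 3)) * Nc p n - ((ee p n i : ℕ) : ZMod (n * p ^ 3)) := by
        rw [Nat.cast_add, negcast p n hn hp0, h1]
        ring
      rw [h5, h3]
      push_cast
      push_cast at h2
      linear_combination -h2

lemma th_comp [NeZero (n * p ^ 3)] (j j' : ℕ) (x : ZMod (n * p ^ 3)) :
    th p n j (th p n j' x) = th p n (j + j') x := by
  have hval : (th p n j' x).val % p = x.val % p := by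
    rw [th, show ((x.val % p : ℕ) : ZMod (n * p ^ 3)) * ((p * (j' * n) : ℕ) : ZMod (n * p ^ 3))
        = ((x.val % p * (p * (j' * n)) : ℕ) : ZMod (n * p ^ 3)) by push_cast; ring, valp2,
      show x.val % p * (p * (j' * n)) = p * (x.val % p * (j' * n)) by ring,
      Nat.add_mul_mod_self_left]
  have step : th p n j (th p n j' x)
      = th p n j' x + (((th p n j' x).val % p : ℕ) : ZMod (n * p ^ 3))
          * ((p * (j * n) : ℕ) : ZMod (n * p ^ 3)) := rfl
  rw [step, hval]
  simp only [th]
  have h : ((x.val % p : ℕ) : ZMod (n * p ^ 3)) * ((p * (j' * n) : ℕ) : ZMod (n * p ^ 3))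
      + ((x.val % p : ℕ) : ZMod (n * p ^ 3)) * ((p * (j * n) : ℕ) : ZMod (n * p ^ 3))
      = ((x.val % p : ℕ) : ZMod (n * p ^ 3)) * ((p * ((j + j') * n) : ℕ) : ZMod (n * p ^ 3)) := by
    push_cast; ring
  linear_combination h

lemma th_id [NeZero (n * p ^ 3)] (j : ℕ) (x : ZMod (n * p ^ 3)) :
    th p n (j * p ^ 2) x = x := by
  rw [th]
  have h : ((p * (j * p ^ 2 * n) : ℕ) : ZMod (n * p ^ 3)) = 0 := by
    rw [show p * (j * p ^ 2 * n) = n * p ^ 3 * j by ring, Nat.cast_mul, ZMod.natCast_self,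
      zero_mul]
  rw [h, mul_zero, add_zero]

lemma jsum (hp : 0 < p) (j : ℕ) : j * (p ^ 2 - 1) + j = j * p ^ 2 := by
  have h : p ^ 2 - 1 + 1 = p ^ 2 := Nat.succ_pred_eq_of_pos (pow_pos hp 2)
  calc j * (p ^ 2 - 1) + j = j * (p ^ 2 - 1 + 1) := by ring
    _ = j * p ^ 2 := by rw [h]

lemma th_linv [NeZero (n * p ^ 3)] (hp : 0 < p) (j : ℕ) (x : ZMod (n * p ^ 3)) :
    th p n (j * (p ^ 2 - 1)) (th p n j x) = x := by
  rw [th_comp, jsum p hp j, th_id]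

lemma th_rinv [NeZero (n * p ^ 3)] (hp : 0 < p) (j : ℕ) (x : ZMod (n * p ^ 3)) :
    th p n j (th p n (j * (p ^ 2 - 1)) x) = x := by
  rw [th_comp, Nat.add_comm, jsum p hp j, th_id]

lemma th_zero [NeZero (n * p ^ 3)] (j : ℕ) : th p n j 0 = 0 := by
  rw [th, ZMod.val_zero, Nat.zero_mod, Nat.cast_zero, zero_mul, add_zero]

lemma fwd [NeZero (n * p ^ 3)] (hpp : p.Prime) (hn : 0 < n) (i j : ℕ) (hi : 1 ≤ i)
    (x : ZMod (n * p ^ 3)) (hx : x ∈ Sym p n ((ee p n i : ℕ) : ZMod (n * p ^ 3))) :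
    th p n j x ∈ Sym p n ((ee p n (i + j) : ℕ) : ZMod (n * p ^ 3)) := by
  have h := memdiff p n hpp hn i j hi x 0 (by simpa using hx)
  rw [th_zero, sub_zero] at h
  exact h

lemma circSet_eq (hp : 0 < p) (i : ℕ) :
    circSet p n i = insert ((p : ℕ) : ZMod (n * p ^ 3)) (SZ p n ((ee p n i : ℕ) : ZMod (n * p ^ 3))) := by
  rw [circSet]
  congr 1
  ext x
  simp only [Set.mem_setOf_eq, SZ]
  constructor
  · rintro ⟨k, hk, hx | hx⟩
    · exact ⟨(k : ℤ), Or.inl (by rw [hx, ee, Nc]; push_cast; ring)⟩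
    · exact ⟨(k : ℤ), Or.inr (by rw [hx, ee, Nc]; push_cast; ring)⟩
  · rintro ⟨m, hx | hx⟩ <;> obtain ⟨r, hr, hrm⟩ := intNc p n hp m
    · exact ⟨r, hr, Or.inl (by rw [hx, ← hrm, ee])⟩
    · exact ⟨r, hr, Or.inr (by rw [hx, ← hrm, ee])⟩

lemma SZ_neg (δ x : ZMod (n * p ^ 3)) (hx : x ∈ SZ p n δ) : -x ∈ SZ p n δ := by
  obtain ⟨m, hm | hm⟩ := hx
  · exact ⟨-m, Or.inr (by rw [hm]; push_cast; ring)⟩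
  · exact ⟨-m, Or.inl (by rw [hm]; push_cast; ring)⟩

lemma neg_image (δ : ZMod (n * p ^ 3)) :
    (fun a : ZMod (n * p ^ 3) => -a) '' SZ p n δ = SZ p n δ := by
  ext x
  constructor
  · rintro ⟨y, hy, rfl⟩; exact SZ_neg p n δ y hy
  · intro hx; exact ⟨-x, SZ_neg p n δ x hx, neg_neg x⟩

lemma sym_eq (hp : 0 < p) (i : ℕ) :
    circSet p n i ∪ (fun a : ZMod (n * p ^ 3) => -a) '' circSet p n i
      = Sym p n ((ee p n i : ℕ) : ZMod (n * p ^ 3)) := by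
  rw [circSet_eq p n hp i, Set.image_insert_eq, neg_image, Sym]
  ext x
  simp only [Set.mem_union, Set.mem_insert_iff]
  tauto

lemma SZ_shift (δ : ZMod (n * p ^ 3)) (m : ℤ) :
    SZ p n (δ + (m : ZMod (n * p ^ 3)) * Nc p n) = SZ p n δ := by
  ext x
  constructor
  · rintro ⟨m', h | h⟩
    · exact ⟨m' + m, Or.inl (by rw [h]; push_cast; ring)⟩
    · exact ⟨m' - m, Or.inr (by rw [h]; push_cast; ring)⟩
  · rintro ⟨m', h | h⟩
    · exact ⟨m' - m, Or.inl (by rw [h]; push_cast; ring)⟩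
    · exact ⟨m' + m, Or.inr (by rw [h]; push_cast; ring)⟩

lemma Sym_shift (δ : ZMod (n * p ^ 3)) (m : ℤ) :
    Sym p n (δ + (m : ZMod (n * p ^ 3)) * Nc p n) = Sym p n δ := by
  rw [Sym, Sym, SZ_shift]

lemma ee_shift (i : ℕ) (hi : 1 ≤ i) (t : ℕ) :
    ((ee p n (i + t * p) : ℕ) : ZMod (n * p ^ 3))
      = ((ee p n i : ℕ) : ZMod (n * p ^ 3)) + ((t : ℤ) : ZMod (n * p ^ 3)) * Nc p n := by
  have h : ee p n (i + t * p) = ee p n i + t * (n * p ^ 2) := by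
    rw [ee, ee]
    have h2 : i + t * p - 1 = (i - 1) + t * p := by omega
    rw [h2]; ring
  rw [h, Nat.cast_add]
  congr 1
  rw [Nc]; push_cast; ring

end Stmt16

open Stmt16

/-- For a prime `p`, the map `θ_{np³,p,jn}(x) = x + p·jn·(x mod p)` carries the symmetric
closure of `R_i` onto that of `R_{i+j}` (indices mod `p`); in particular the circulant
graphs `C_{np³}(R_i)`, `1 ≤ i ≤ p`, are pairwise isomorphic. -/
theorem stmt_16 (p n : ℕ) (hp : p.Prime) (hn : 0 < n) :
    (∀ i j : ℕ, 1 ≤ i → i ≤ p →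
      (fun x : ZMod (n * p ^ 3) =>
          x + ((x.val % p : ℕ) : ZMod (n * p ^ 3)) * ((p * (j * n) : ℕ) : ZMod (n * p ^ 3))) ''
        (circSet p n i ∪ (fun a : ZMod (n * p ^ 3) => -a) '' circSet p n i) =
      circSet p n (i + j) ∪ (fun a : ZMod (n * p ^ 3) => -a) '' circSet p n (i + j)) ∧
    (∀ i j : ℕ, 1 ≤ i → i ≤ p → 1 ≤ j → j ≤ p →
      Nonempty
        ((SimpleGraph.fromRel fun x y : ZMod (n * p ^ 3) =>
            x - y ∈ circSet p n i ∪ (fun a : ZMod (n * p ^ 3) => -a) '' circSet p n i) ≃g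
          (SimpleGraph.fromRel fun x y : ZMod (n * p ^ 3) =>
            x - y ∈ circSet p n j ∪ (fun a : ZMod (n * p ^ 3) => -a) '' circSet p n j))) := by
  haveI : NeZero (n * p ^ 3) := NeZero.of_pos (Nat.mul_pos hn (pow_pos hp.pos 3))
  constructor
  · intro i j hi1 hip
    have hfun : (fun x : ZMod (n * p ^ 3) =>
        x + ((x.val % p : ℕ) : ZMod (n * p ^ 3)) * ((p * (j * n) : ℕ) : ZMod (n * p ^ 3)))
        = th p n j := rfl
    rw [hfun, sym_eq p n hp.pos i, sym_eq p n hp.pos (i + j)]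
    ext y
    constructor
    · rintro ⟨x, hx, rfl⟩
      exact fwd p n hp hn i j hi1 x hx
    · intro hy
      refine ⟨th p n (j * (p ^ 2 - 1)) y, ?_, th_rinv p n hp.pos j y⟩
      have h1 := fwd p n hp hn (i + j) (j * (p ^ 2 - 1)) (by omega) y hy
      have hidx : i + j + j * (p ^ 2 - 1) = i + j * p * p := by
        have h2 := jsum p hp.pos j
        have h3 : j * p ^ 2 = j * p * p := by ring
        omega
      rwa [hidx, ee_shift p n i hi1 (j * p), Sym_shift] at h1
  · intro i j hi1 hip hj1 hjp
    set j' := p + j - i with hj'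
    have hij' : i + j' = j + 1 * p := by omega
    have key : ∀ x y : ZMod (n * p ^ 3),
        x - y ∈ circSet p n i ∪ (fun a : ZMod (n * p ^ 3) => -a) '' circSet p n i ↔
        th p n j' x - th p n j' y ∈
          circSet p n j ∪ (fun a : ZMod (n * p ^ 3) => -a) '' circSet p n j := by
      intro x y
      rw [sym_eq p n hp.pos i, sym_eq p n hp.pos j]
      have hSymj : Sym p n ((ee p n (i + j') : ℕ) : ZMod (n * p ^ 3))
          = Sym p n ((ee p n j : ℕ) : ZMod (n * p ^ 3)) := by
        rw [hij', ee_shift p n j hj1 1, Sym_shift]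
      constructor
      · intro h
        have h2 := memdiff p n hp hn i j' hi1 x y h
        rwa [hSymj] at h2
      · intro h
        rw [← hSymj] at h
        have h2 := memdiff p n hp hn (i + j') (j' * (p ^ 2 - 1)) (by omega)
          (th p n j' x) (th p n j' y) h
        rw [th_linv p n hp.pos j' x, th_linv p n hp.pos j' y] at h2
        have hidx : i + j' + j' * (p ^ 2 - 1) = i + j' * p * p := by
          have h3 := jsum p hp.pos j'
          have h4 : j' * p ^ 2 = j' * p * p := by ring
          omega
        rwa [hidx, ee_shift p n i hi1 (j' * p), Sym_shift] at h2
    refine ⟨⟨⟨th p n j', th p n (j' * (p ^ 2 - 1)),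
      th_linv p n hp.pos j', th_rinv p n hp.pos j'⟩, ?_⟩⟩
    intro a b
    simp only [Equiv.coe_fn_mk, SimpleGraph.fromRel_adj]
    constructor
    · rintro ⟨h1, h2⟩
      refine ⟨?_, h2.imp (key a b).mpr (key b a).mpr⟩
      intro hab
      exact h1 (by rw [hab])
    · rintro ⟨h1, h2⟩
      refine ⟨?_, h2.imp (key a b).mp (key b a).mp⟩
      intro hab
      apply h1
      have h3 := congrArg (th p n (j' * (p ^ 2 - 1))) hab
      rwa [th_linv p n hp.pos j' a, th_linv p n hp.pos j' b] at h3
end
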